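/- Let φ and ψ be unital linear functionals on ℂ⟨x₁, x₂, …⟩, and let σ be the unital algebra endomorphism of ℂ⟨x₁, x₂, …⟩ with σ(xⱼ) = x_{j+1} for all j. Then there exists a unique sequence of elements A₀, A₁, A₂, … of ℂ⟨x₁, x₂, …⟩ such that A₀ = 1 and, for every k ≥ 1: φ(Aₖ) = 0, and for every i ≥ 1, (ψ ⊗ id)(∂ᵢ Aₖ) = σ(A_{k−1}) if i = 1 and (ψ ⊗ id)(∂ᵢ Aₖ) = 0 if i ≠ 1. (These are the c-free Appell polynomials A^{φ,ψ}(x₁, …, xₖ) of the pair (φ, ψ).) -/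

import Mathlib

open TensorProduct

/-- The product `x_{u(1)} ⋯ x_{u(n)}` of generators of the free algebra along a word. -/
noncomputable def wordProd (l : List ℕ) : FreeAlgebra ℂ ℕ :=
  (l.map (FreeAlgebra.ι ℂ)).prod

/-- The partial difference quotient `∂ᵢ`, the ℂ-linear map determined on the basis of
words by `∂ᵢ(x_{u(1)}⋯x_{u(n)}) = Σ_{j : u(j) = i} x_{u(1)}⋯x_{u(j−1)} ⊗ x_{u(j+1)}⋯x_{u(n)}`
(here `i` indexes the generator `FreeAlgebra.ι ℂ i`). -/
noncomputable def dq (i : ℕ) :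
    FreeAlgebra ℂ ℕ →ₗ[ℂ] FreeAlgebra ℂ ℕ ⊗[ℂ] FreeAlgebra ℂ ℕ :=
  (FreeAlgebra.basisFreeMonoid ℂ ℕ).constr ℂ fun w =>
    ∑ j ∈ Finset.range (FreeMonoid.toList w).length,
      if (FreeMonoid.toList w).getD j 0 = i then
        wordProd ((FreeMonoid.toList w).take j) ⊗ₜ[ℂ]
          wordProd ((FreeMonoid.toList w).drop (j + 1))
      else 0

/-- The map `(id ⊗ ψ) : a ⊗ b ↦ ψ(b)·a`. -/
noncomputable def idTensor (ψ : FreeAlgebra ℂ ℕ →ₗ[ℂ] ℂ) :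
    FreeAlgebra ℂ ℕ ⊗[ℂ] FreeAlgebra ℂ ℕ →ₗ[ℂ] FreeAlgebra ℂ ℕ :=
  TensorProduct.lift
    { toFun := fun a => ψ.smulRight a
      map_add' := by intro a b; ext c; simp
      map_smul' := by
        intro c a
        ext b
        simp only [LinearMap.smulRight_apply, LinearMap.smul_apply, RingHom.id_apply]
        rw [smul_comm] }

/-- The map `(ψ ⊗ id) : a ⊗ b ↦ ψ(a)·b`. -/
noncomputable def tensorId (ψ : FreeAlgebra ℂ ℕ →ₗ[ℂ] ℂ) :
    FreeAlgebra ℂ ℕ ⊗[ℂ] FreeAlgebra ℂ ℕ →ₗ[ℂ] FreeAlgebra ℂ ℕ :=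
  TensorProduct.lift
    { toFun := fun a => ψ a • (LinearMap.id : FreeAlgebra ℂ ℕ →ₗ[ℂ] FreeAlgebra ℂ ℕ)
      map_add' := by intro a b; simp [add_smul]
      map_smul' := by intro c a; simp [smul_smul] }

/-- The shift endomorphism `σ` of `ℂ⟨x₁, x₂, …⟩` with `σ(xⱼ) = x_{j+1}`, i.e. the unital
algebra endomorphism sending the generator `ι m` to `ι (m+1)`. -/
noncomputable def shiftHom : FreeAlgebra ℂ ℕ →ₐ[ℂ] FreeAlgebra ℂ ℕ :=
  FreeAlgebra.lift ℂ fun j => FreeAlgebra.ι ℂ (j + 1)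

/-! Write `Dᵢ = (ψ ⊗ id) ∘ ∂ᵢ`. Since `ψ(1) = 1`, for a word `w` the element `Dᵢ(xₐ w)` is
`δᵢₐ w` plus a combination of proper suffixes of `w`. Hence `Dᵢ P = δᵢₐ g` can be solved by
recursion on the length of words, and if every `Dᵢ` kills `X`, then the coefficient of a
longest word `i :: t` of `X` equals the coefficient of `t` in `Dᵢ X = 0`, so `X` is a constant.
Each `Aₖ` is thus determined by `A_{k-1}` up to a constant, which `φ(Aₖ) = 0` fixes. -/

open FreeMonoid

@[simp] lemma wordProd_nil : wordProd [] = 1 := rfl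

@[simp] lemma wordProd_cons (a : ℕ) (l : List ℕ) :
    wordProd (a :: l) = FreeAlgebra.ι ℂ a * wordProd l := by
  simp [wordProd]

noncomputable def wordBasis : Module.Basis (List ℕ) ℂ (FreeAlgebra ℂ ℕ) :=
  (FreeAlgebra.basisFreeMonoid ℂ ℕ).reindex FreeMonoid.toList

lemma equivMonoidAlgebraFreeMonoid_wordProd (l : List ℕ) :
    FreeAlgebra.equivMonoidAlgebraFreeMonoid (wordProd l) =
      MonoidAlgebra.single (ofList l) (1 : ℂ) := by
  induction l with
  | nil => exact map_one _
  | cons a l ih =>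
    rw [wordProd_cons, map_mul, ih, ofList_cons, ← one_mul (1 : ℂ),
      ← MonoidAlgebra.single_mul_single]
    simp [FreeAlgebra.equivMonoidAlgebraFreeMonoid]

@[simp] lemma wordBasis_apply (l : List ℕ) : wordBasis l = wordProd l := by
  simp only [wordBasis, Module.Basis.reindex_apply, FreeAlgebra.basisFreeMonoid,
    Module.Basis.map_apply, Finsupp.coe_basisSingleOne, toList_symm]
  rw [LinearEquiv.symm_apply_eq]
  simp [equivMonoidAlgebraFreeMonoid_wordProd]

@[simp] lemma wordBasis_repr_wordProd (l : List ℕ) :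
    wordBasis.repr (wordProd l) = Finsupp.single l 1 := by
  rw [← wordBasis_apply, Module.Basis.repr_self]

lemma dq_wordProd (i : ℕ) (l : List ℕ) :
    dq i (wordProd l) = ∑ j ∈ Finset.range l.length,
      if l.getD j 0 = i then wordProd (l.take j) ⊗ₜ[ℂ] wordProd (l.drop (j + 1)) else 0 := by
  rw [← wordBasis_apply, wordBasis, Module.Basis.reindex_apply, dq, Module.Basis.constr_basis]
  rfl

@[simp] lemma dq_one (i : ℕ) : dq i 1 = 0 := dq_wordProd i []

section
variable (ψ : FreeAlgebra ℂ ℕ →ₗ[ℂ] ℂ)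

@[simp] lemma tensorId_tmul (a b : FreeAlgebra ℂ ℕ) : tensorId ψ (a ⊗ₜ[ℂ] b) = ψ a • b := rfl

lemma tensorId_dq_wordProd (i : ℕ) (l : List ℕ) :
    tensorId ψ (dq i (wordProd l)) = ∑ j ∈ Finset.range l.length,
      if l.getD j 0 = i then ψ (wordProd (l.take j)) • wordProd (l.drop (j + 1)) else 0 := by
  rw [dq_wordProd, map_sum]
  exact Finset.sum_congr rfl fun j _ => by split_ifs <;> simp

lemma tensorId_dq_wordProd_cons (hψ1 : ψ 1 = 1) (i a : ℕ) (l : List ℕ) :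
    tensorId ψ (dq i (wordProd (a :: l))) = (if i = a then wordProd l else 0) +
      ∑ j ∈ Finset.range l.length, if l.getD j 0 = i then
        ψ (wordProd (a :: l.take j)) • wordProd (l.drop (j + 1)) else 0 := by
  rw [tensorId_dq_wordProd, List.length_cons, Finset.sum_range_succ', add_comm]
  simp [hψ1, eq_comm]

lemma exists_tensorId_dq_eq_ite_wordProd (hψ1 : ψ 1 = 1) (l : List ℕ) (a : ℕ) :
    ∃ P, ∀ i, tensorId ψ (dq i P) = if i = a then wordProd l else 0 := by
  induction hn : l.length using Nat.strong_induction_on generalizing l a with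
  | _ n ih =>
    have hsuffix : ∀ j ∈ Finset.range l.length, ∃ Q, ∀ i,
        tensorId ψ (dq i Q) = if i = l.getD j 0 then wordProd (l.drop (j + 1)) else 0 :=
      fun j hj => ih _ (by rw [Finset.mem_range] at hj; rw [List.length_drop]; omega) _ _ rfl
    choose! Q hQ using hsuffix
    refine ⟨wordProd (a :: l) - ∑ j ∈ Finset.range l.length,
      ψ (wordProd (a :: l.take j)) • Q j, fun i => ?_⟩
    have hcancel :
        ∑ j ∈ Finset.range l.length, tensorId ψ (dq i (ψ (wordProd (a :: l.take j)) • Q j)) =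
          ∑ j ∈ Finset.range l.length, if l.getD j 0 = i then
            ψ (wordProd (a :: l.take j)) • wordProd (l.drop (j + 1)) else 0 :=
      Finset.sum_congr rfl fun j hj => by
        rw [map_smul, map_smul, hQ j hj i, smul_ite, smul_zero]
        exact if_congr eq_comm rfl rfl
    rw [map_sub, map_sub, tensorId_dq_wordProd_cons ψ hψ1, map_sum, map_sum, hcancel,
      add_sub_cancel_right]

lemma exists_tensorId_dq_eq_ite (hψ1 : ψ 1 = 1) (g : FreeAlgebra ℂ ℕ) (a : ℕ) :
    ∃ P, ∀ i, tensorId ψ (dq i P) = if i = a then g else 0 := by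
  have hg : g ∈ Submodule.span ℂ (Set.range wordBasis) := wordBasis.span_eq ▸ Submodule.mem_top
  induction hg using Submodule.span_induction with
  | mem _ hw =>
    obtain ⟨l, rfl⟩ := hw
    simpa using exists_tensorId_dq_eq_ite_wordProd ψ hψ1 l a
  | zero => exact ⟨0, by simp⟩
  | add g h _ _ hg hh =>
    obtain ⟨P, hP⟩ := hg
    obtain ⟨Q, hQ⟩ := hh
    exact ⟨P + Q, fun i => by rw [map_add, map_add, hP, hQ]; split_ifs <;> simp⟩
  | smul c g _ hg =>
    obtain ⟨P, hP⟩ := hg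
    exact ⟨c • P, fun i => by rw [map_smul, map_smul, hP]; split_ifs <;> simp⟩

lemma wordBasis_repr_tensorId_dq_wordProd (hψ1 : ψ 1 = 1) (i : ℕ) (t l : List ℕ)
    (hl : l.length ≤ t.length + 1) :
    wordBasis.repr (tensorId ψ (dq i (wordProd l))) t = wordBasis.repr (wordProd l) (i :: t) := by
  rw [wordBasis_repr_wordProd, Finsupp.single_apply]
  cases l with
  | nil => simp
  | cons a l =>
    have hsuffix : ∀ j ∈ Finset.range l.length, l.drop (j + 1) ≠ t := by
      intro j hj h
      have := congrArg List.length h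
      simp only [Finset.mem_range, List.length_drop, List.length_cons, add_le_add_iff_right]
        at hj this hl
      omega
    rw [tensorId_dq_wordProd_cons ψ hψ1, map_add, map_sum, Finsupp.add_apply,
      Finsupp.finsetSum_apply, Finset.sum_eq_zero fun j hj => ?_]
    · by_cases h : i = a <;> simp [h, Finsupp.single_apply, eq_comm]
    · split_ifs <;> simp [hsuffix j hj]

def degreeLE (n : ℕ) : Submodule ℂ (FreeAlgebra ℂ ℕ) :=
  Submodule.span ℂ (wordBasis '' {l | l.length ≤ n})

lemma wordBasis_repr_tensorId_dq (hψ1 : ψ 1 = 1) (i : ℕ) (t : List ℕ) {X : FreeAlgebra ℂ ℕ}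
    (hX : X ∈ degreeLE (t.length + 1)) :
    wordBasis.repr (tensorId ψ (dq i X)) t = wordBasis.repr X (i :: t) := by
  let lhs : FreeAlgebra ℂ ℕ →ₗ[ℂ] ℂ :=
    Finsupp.lapply t ∘ₗ wordBasis.repr.toLinearMap ∘ₗ tensorId ψ ∘ₗ dq i
  let rhs : FreeAlgebra ℂ ℕ →ₗ[ℂ] ℂ := Finsupp.lapply (i :: t) ∘ₗ wordBasis.repr.toLinearMap
  refine LinearMap.eqOn_span' (f := lhs) (g := rhs) ?_ hX
  rintro _ ⟨l, hl, rfl⟩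
  simpa [lhs, rhs] using wordBasis_repr_tensorId_dq_wordProd ψ hψ1 i t l hl

lemma mem_degreeLE_of_tensorId_dq_eq_zero (hψ1 : ψ 1 = 1) {n : ℕ} {X : FreeAlgebra ℂ ℕ}
    (hX : X ∈ degreeLE (n + 1)) (h : ∀ i, tensorId ψ (dq i X) = 0) : X ∈ degreeLE n := by
  have hsupp := (Module.Basis.mem_span_image _).mp hX
  refine (Module.Basis.mem_span_image _).mpr fun l hl => ?_
  by_contra hlong
  have hlen : l.length = n + 1 := by
    have hle : l.length ≤ n + 1 := hsupp hl
    have hgt : n < l.length := not_le.mp hlong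
    omega
  obtain ⟨i, t, rfl⟩ := List.exists_cons_of_length_eq_add_one hlen
  simp only [List.length_cons, Nat.add_right_cancel_iff] at hlen
  apply Finsupp.mem_support_iff.mp hl
  rw [← wordBasis_repr_tensorId_dq ψ hψ1 i t (hlen ▸ hX), h i, map_zero, Finsupp.zero_apply]

lemma exists_eq_smul_one_of_tensorId_dq_eq_zero (hψ1 : ψ 1 = 1) {X : FreeAlgebra ℂ ℕ}
    (h : ∀ i, tensorId ψ (dq i X) = 0) : ∃ c : ℂ, X = c • 1 := by
  obtain ⟨n, hn⟩ : ∃ n, X ∈ degreeLE n :=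
    ⟨_, (Module.Basis.mem_span_image _).mpr fun _ hl => Finset.le_sup (f := List.length) hl⟩
  have h0 : X ∈ degreeLE 0 := by
    induction n with
    | zero => exact hn
    | succ n ih => exact ih (mem_degreeLE_of_tensorId_dq_eq_zero ψ hψ1 hn h)
  have hwords : wordBasis '' {l : List ℕ | l.length ≤ 0} = {1} := by
    simp [List.length_eq_zero_iff]
  rw [degreeLE, hwords, Submodule.mem_span_singleton] at h0
  exact h0.imp fun _ hc => hc.symm

end

lemma eq_of_tensorId_dq_eq (φ ψ : FreeAlgebra ℂ ℕ →ₗ[ℂ] ℂ) (hφ1 : φ 1 = 1) (hψ1 : ψ 1 = 1)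
    {X Y : FreeAlgebra ℂ ℕ} (hφ : φ X = φ Y)
    (h : ∀ i, tensorId ψ (dq i X) = tensorId ψ (dq i Y)) : X = Y := by
  obtain ⟨c, hc⟩ := exists_eq_smul_one_of_tensorId_dq_eq_zero ψ hψ1 (X := X - Y)
    fun i => by rw [map_sub, map_sub, h, sub_self]
  have hc0 : c = 0 := by simpa [hφ1, hφ] using (congrArg φ hc).symm
  rwa [hc0, zero_smul, sub_eq_zero] at hc

lemma exists_appell_step (φ ψ : FreeAlgebra ℂ ℕ →ₗ[ℂ] ℂ) (hφ1 : φ 1 = 1) (hψ1 : ψ 1 = 1)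
    (g : FreeAlgebra ℂ ℕ) :
    ∃ P, φ P = 0 ∧ ∀ i, tensorId ψ (dq i P) = if i = 0 then g else 0 := by
  obtain ⟨P, hP⟩ := exists_tensorId_dq_eq_ite ψ hψ1 g 0
  refine ⟨P - φ P • 1, by simp [hφ1], fun i => ?_⟩
  rw [map_sub, map_smul, dq_one, smul_zero, sub_zero, hP]

/-- With the convention `x_j := FreeAlgebra.ι ℂ (j − 1)`, so that `∂₁ = dq 0`. -/
theorem cfree_appell_exists_unique (φ ψ : FreeAlgebra ℂ ℕ →ₗ[ℂ] ℂ)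
    (hφ1 : φ 1 = 1) (hψ1 : ψ 1 = 1) :
    ∃! A : ℕ → FreeAlgebra ℂ ℕ, A 0 = 1 ∧
      ∀ k, 1 ≤ k → φ (A k) = 0 ∧
        ∀ i : ℕ, tensorId ψ (dq i (A k)) = if i = 0 then shiftHom (A (k - 1)) else 0 := by
  choose step hstep_φ hstep_dq using exists_appell_step φ ψ hφ1 hψ1
  refine ⟨fun k => (step ∘ shiftHom)^[k] 1, ⟨rfl, ?_⟩, ?_⟩
  · rintro (_ | k) hk
    · omega
    · simp only [Function.iterate_succ_apply', Function.comp_apply]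
      exact ⟨hstep_φ _, hstep_dq _⟩
  · rintro B ⟨hB0, hB⟩
    funext k
    induction k with
    | zero => exact hB0
    | succ k ih =>
      obtain ⟨hφB, hdqB⟩ := hB (k + 1) k.succ_pos
      rw [Function.iterate_succ_apply', Function.comp_apply]
      refine eq_of_tensorId_dq_eq φ ψ hφ1 hψ1 (by rw [hφB, hstep_φ]) fun i => ?_
      rw [hdqB, hstep_dq, Nat.add_sub_cancel, ih]
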